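/- arXiv:1708.09205 — 6 statements merged into one kernel-verified Lean document; each statement's English description precedes it below -/
import Mathlib

section
/- The modular group SL₂(ℤ) is isomorphic to the abstract group generated by two elements s and t subject to the relations s⁴ = 1 and (ts)³ = s², via s ↦ [[0,-1],[1,0]] and t ↦ [[1,1],[0,1]]. -/
/-!
The map `s ↦ S`, `t ↦ T` respects the relations, and it is onto because `S` and `T` generate
`SL₂(ℤ)`. For injectivity, map the presented group `G` to the free product
`ℤ/2 ∗ ℤ/3 = ⟨σ⟩ ∗ ⟨τ⟩` by `s ↦ σ`, `t ↦ τσ⁻¹`. Conversely `σ ↦ s`, `τ ↦ ts` defines a map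
`ℤ/2 ∗ ℤ/3 → G/⟨s²⟩` (the element `s²` is central), so the kernel of `G → ℤ/2 ∗ ℤ/3` lies in
`⟨s²⟩ = {1, s²}`. On the other hand, `σ ↦ S`, `τ ↦ TS` acting on the upper half-plane is injective
on `ℤ/2 ∗ ℤ/3` by the ping-pong lemma: `S` maps `Re z > 0` into `Re z < 0`, while `TS` and `(TS)²`
map `Re z < 0` into `Re z > 0`. Hence the kernel of `G → SL₂(ℤ)` is contained in `{1, s²}`, and
`s² ↦ S² = -1 ≠ 1`.
-/

/-- The relations of the presentation: generators `s, t` (indexed by `Bool`, `true ↦ s`,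
`false ↦ t`) subject to `s⁴ = 1` and `(t*s)³ = s²`, i.e. `(t*s)³ * s⁻² = 1`. -/
def sl2Rels : Set (FreeGroup Bool) :=
  {FreeGroup.of true ^ 4, (FreeGroup.of false * FreeGroup.of true) ^ 3 * (FreeGroup.of true ^ 2)⁻¹}

open ModularGroup Monoid UpperHalfPlane
open scoped MatrixGroups

section

variable {Γ : Type*} [Group Γ]

theorem Subgroup.normal_of_le_center {H : Subgroup Γ} (h : H ≤ Subgroup.center Γ) : H.Normal :=
  ⟨fun n hn g => by rwa [Subgroup.mem_center_iff.mp (h hn) g, mul_inv_cancel_right]⟩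

def zmodPowHom {n : ℕ} (x : Γ) (hx : x ^ n = 1) : Multiplicative (ZMod n) →* Γ :=
  AddMonoidHom.toMultiplicativeLeft <| ZMod.lift n
    ⟨zmultiplesHom (Additive Γ) (.ofMul x), by
      simpa [zmultiplesHom] using congrArg Additive.ofMul hx⟩

theorem zmodPowHom_ofAdd_natCast {n : ℕ} (x : Γ) (hx : x ^ n = 1) (k : ℕ) :
    zmodPowHom x hx (.ofAdd (k : ZMod n)) = x ^ k := by
  rw [← Int.cast_natCast, zmodPowHom, AddMonoidHom.coe_toMultiplicativeLeft, Function.comp_apply,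
    Function.comp_apply, toAdd_ofAdd, ZMod.lift_coe]
  simp [zmultiplesHom]

theorem exists_zmodPowHom_eq_pow {n : ℕ} [NeZero n] (x : Γ) (hx : x ^ n = 1)
    {h : Multiplicative (ZMod n)} (hh : h ≠ 1) :
    ∃ k, 0 < k ∧ k < n ∧ zmodPowHom x hx h = x ^ k :=
  ⟨h.toAdd.val, ZMod.val_pos.mpr hh, ZMod.val_lt _, by
    simpa using zmodPowHom_ofAdd_natCast x hx h.toAdd.val⟩

end

theorem re_S_smul (z : ℍ) : (S • z).re = -z.re / Complex.normSq z := by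
  rw [modular_S_smul]
  change ((-(z : ℂ))⁻¹).re = _
  rw [Complex.inv_re, Complex.normSq_neg, Complex.neg_re]
  rfl

theorem re_T_mul_S_smul (z : ℍ) : ((T * S) • z).re = 1 - z.re / Complex.normSq z := by
  rw [mul_smul, re_T_smul, re_S_smul]
  ring

theorem re_S_smul_neg {z : ℍ} (hz : 0 < z.re) : (S • z).re < 0 := by
  rw [re_S_smul]
  exact div_neg_of_neg_of_pos (neg_neg_of_pos hz) z.normSq_pos

theorem one_lt_re_T_mul_S_smul {z : ℍ} (hz : z.re < 0) : 1 < ((T * S) • z).re := by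
  rw [re_T_mul_S_smul, lt_sub_iff_add_lt, add_lt_iff_neg_left]
  exact div_neg_of_neg_of_pos hz z.normSq_pos

theorem re_T_mul_S_smul_pos {z : ℍ} (hz : 1 < z.re) : 0 < ((T * S) • z).re := by
  have hnormSq : Complex.normSq z = z.re * z.re + z.im * z.im := Complex.normSq_apply _
  rw [re_T_mul_S_smul, sub_pos, div_lt_one z.normSq_pos, hnormSq]
  nlinarith [z.im_pos]

namespace SL2ZPresentation

abbrev G := PresentedGroup sl2Rels

abbrev s : G := .of true
abbrev t : G := .of false

theorem s_pow_four : s ^ 4 = 1 := by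
  simpa [PresentedGroup.of] using PresentedGroup.one_of_mem (rels := sl2Rels) (Or.inl rfl)

theorem t_mul_s_pow_three : (t * s) ^ 3 = s ^ 2 := by
  simpa [PresentedGroup.of, mul_inv_eq_one] using
    PresentedGroup.one_of_mem (rels := sl2Rels) (Or.inr rfl)

section Lift

variable {K : Type*} [Group K] {x y : K}

theorem sl2Rels_lift_eq_one (hx : x ^ 4 = 1) (hyx : (y * x) ^ 3 = x ^ 2) :
    ∀ r ∈ sl2Rels, FreeGroup.lift (fun b => cond b x y) r = 1 := by
  rintro r (rfl | rfl) <;> simp_all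

variable (hx : x ^ 4 = 1) (hyx : (y * x) ^ 3 = x ^ 2)

def lift : G →* K :=
  PresentedGroup.toGroup (sl2Rels_lift_eq_one hx hyx)

@[simp]
theorem lift_s : lift hx hyx s = x :=
  PresentedGroup.toGroup.of _

@[simp]
theorem lift_t : lift hx hyx t = y :=
  PresentedGroup.toGroup.of _

end Lift

theorem s_sq_mem_center : s ^ 2 ∈ Subgroup.center G := by
  have hs : Commute (s ^ 2) s := (Commute.refl s).pow_left 2
  have hts : Commute (s ^ 2) (t * s) := t_mul_s_pow_three ▸ (Commute.refl _).pow_left 3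
  have ht : Commute (s ^ 2) t := by simpa using hts.mul_right hs.inv_right
  have hcentralizer : (⊤ : Subgroup G) ≤ Subgroup.centralizer {s ^ 2} := by
    rw [← PresentedGroup.closure_range_of, Subgroup.closure_le]
    rintro _ ⟨_ | _, rfl⟩ <;> rw [SetLike.mem_coe, Subgroup.mem_centralizer_singleton_iff]
    exacts [ht.eq.symm, hs.eq.symm]
  exact Subgroup.mem_center_iff.mpr fun g =>
    Subgroup.mem_centralizer_singleton_iff.mp (hcentralizer (Subgroup.mem_top g))

theorem eq_one_or_eq_s_sq_of_mem_zpowers {g : G} (hg : g ∈ Subgroup.zpowers (s ^ 2)) :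
    g = 1 ∨ g = s ^ 2 := by
  obtain ⟨k, rfl⟩ := Subgroup.mem_zpowers_iff.mp hg
  have h : (s ^ 2) ^ (2 : ℤ) = 1 := by rw [zpow_ofNat, ← pow_mul]; exact s_pow_four
  rw [zpow_eq_zpow_emod k h]
  rcases Int.emod_two_eq_zero_or_one k with hk | hk <;> simp [hk]

abbrev Factor (b : Bool) : Type := Multiplicative (ZMod (cond b 2 3))

def σ : CoprodI Factor := CoprodI.of (i := true) (.ofAdd 1)
def τ : CoprodI Factor := CoprodI.of (i := false) (.ofAdd 1)

theorem σ_sq : σ ^ 2 = 1 := by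
  rw [σ, ← map_pow]
  exact (congrArg _ (by decide : (Multiplicative.ofAdd (1 : ZMod 2)) ^ 2 = 1)).trans (map_one _)

theorem τ_pow_three : τ ^ 3 = 1 := by
  rw [τ, ← map_pow]
  exact (congrArg _ (by decide : (Multiplicative.ofAdd (1 : ZMod 3)) ^ 3 = 1)).trans (map_one _)

def toCoprod : G →* CoprodI Factor :=
  lift (x := σ) (y := τ * σ⁻¹) (by rw [show 4 = 2 * 2 from rfl, pow_mul, σ_sq, one_pow])
    (by rw [inv_mul_cancel_right, τ_pow_three, σ_sq])

section CoprodLift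

variable {K : Type*} [Group K] {x y : K} (hx : x ^ 2 = 1) (hy : y ^ 3 = 1)

def factorHom : ∀ b, Factor b →* K
  | true => zmodPowHom x hx
  | false => zmodPowHom y hy

def coprodLift : CoprodI Factor →* K :=
  CoprodI.lift (factorHom hx hy)

@[simp]
theorem coprodLift_σ : coprodLift hx hy σ = x :=
  (CoprodI.lift_of _ _).trans (by simpa [factorHom] using zmodPowHom_ofAdd_natCast x hx 1)

@[simp]
theorem coprodLift_τ : coprodLift hx hy τ = y :=
  (CoprodI.lift_of _ _).trans (by simpa [factorHom] using zmodPowHom_ofAdd_natCast y hy 1)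

theorem coprodLift_toCoprod (f : G →* K) (hs : f s = x) (hts : f (t * s) = y) (g : G) :
    coprodLift hx hy (toCoprod g) = f g := by
  suffices (coprodLift hx hy).comp toCoprod = f from DFunLike.congr_fun this g
  refine PresentedGroup.ext fun b => ?_
  cases b
  · simp [toCoprod, ← hs, ← hts]
  · simp [toCoprod, ← hs]

end CoprodLift

local notation "ρ" => MulAction.toPermHom SL(2, ℤ) ℍ

theorem ρ_S_sq : ρ S ^ 2 = 1 := by
  rw [← map_pow, (by decide : S ^ 2 = -1)]
  ext z
  simp

theorem ρ_T_mul_S_pow_three : ρ (T * S) ^ 3 = 1 := by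
  rw [← map_pow, (by decide : (T * S) ^ 3 = S ^ 2), map_pow, ρ_S_sq]

theorem coprodLift_ρ_injective : Function.Injective (coprodLift ρ_S_sq ρ_T_mul_S_pow_three) := by
  refine CoprodI.lift_injective_of_ping_pong _ (Or.inr ⟨false, ?_⟩)
    (fun b => cond b {z : ℍ | z.re < 0} {z | 0 < z.re}) ?_ ?_ ?_
  · simp
  · rintro (_ | _)
    · exact ⟨(1 : ℝ) +ᵥ I, show (0 : ℝ) < 1 + 0 by norm_num⟩
    · exact ⟨(-1 : ℝ) +ᵥ I, show (-1 : ℝ) + 0 < 0 by norm_num⟩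
  · rintro (_ | _) (_ | _) hij <;> simp only [ne_eq, not_true_eq_false] at hij <;>
      simp only [Function.onFun, cond, Set.disjoint_left, Set.mem_ofPred_eq] <;>
      intro z h1 h2 <;> linarith
  · rintro (_ | _) (_ | _) hij h hh <;> simp only [ne_eq, not_true_eq_false] at hij <;>
      rintro _ ⟨z, hz, rfl⟩
    · obtain ⟨k, hk0, hk3, hk⟩ := exists_zmodPowHom_eq_pow _ ρ_T_mul_S_pow_three hh
      change 0 < (zmodPowHom _ ρ_T_mul_S_pow_three h • z).re
      rw [hk, ← map_pow]
      change 0 < ((T * S) ^ k • z).re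
      have hz : z.re < 0 := hz
      interval_cases k
      · exact zero_lt_one.trans (one_lt_re_T_mul_S_smul hz)
      · rw [pow_two, mul_smul]
        exact re_T_mul_S_smul_pos (one_lt_re_T_mul_S_smul hz)
    · obtain ⟨k, hk0, hk2, hk⟩ := exists_zmodPowHom_eq_pow _ ρ_S_sq hh
      change (zmodPowHom _ ρ_S_sq h • z).re < 0
      obtain rfl : k = 1 := by omega
      rw [hk, pow_one]
      exact re_S_smul_neg hz

def toSL2Z : G →* SL(2, ℤ) :=
  lift (x := S) (y := T) (by decide) (by decide)

@[simp]
theorem toSL2Z_s : toSL2Z s = S :=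
  lift_s _ _

@[simp]
theorem toSL2Z_t : toSL2Z t = T :=
  lift_t _ _

theorem toSL2Z_surjective : Function.Surjective toSL2Z := by
  rw [← MonoidHom.range_eq_top, eq_top_iff, ← SpecialLinearGroup.SL2Z_generators,
    Subgroup.closure_le]
  rintro _ (rfl | rfl)
  exacts [⟨s, toSL2Z_s⟩, ⟨t, toSL2Z_t⟩]

theorem ker_toSL2Z_le_ker_toCoprod : toSL2Z.ker ≤ toCoprod.ker := by
  intro g hg
  apply coprodLift_ρ_injective
  rw [coprodLift_toCoprod _ _ (MonoidHom.comp ρ toSL2Z) (by simp) (by simp), MonoidHom.comp_apply,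
    MonoidHom.mem_ker.mp hg, map_one, map_one]

theorem ker_toCoprod_le_zpowers : toCoprod.ker ≤ Subgroup.zpowers (s ^ 2) := by
  have := Subgroup.normal_of_le_center (Subgroup.zpowers_le.mpr s_sq_mem_center)
  intro g hg
  have hs : QuotientGroup.mk' (Subgroup.zpowers (s ^ 2)) s ^ 2 = 1 := by
    rw [← map_pow, QuotientGroup.mk'_apply, QuotientGroup.eq_one_iff]
    exact Subgroup.mem_zpowers _
  have hts : QuotientGroup.mk' (Subgroup.zpowers (s ^ 2)) (t * s) ^ 3 = 1 := by
    rw [← map_pow, t_mul_s_pow_three, QuotientGroup.mk'_apply, QuotientGroup.eq_one_iff]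
    exact Subgroup.mem_zpowers _
  rw [← QuotientGroup.eq_one_iff, ← QuotientGroup.mk'_apply,
    ← coprodLift_toCoprod hs hts _ rfl rfl, MonoidHom.mem_ker.mp hg, map_one]

theorem toSL2Z_injective : Function.Injective toSL2Z := by
  refine (injective_iff_map_eq_one _).mpr fun g hg => ?_
  rcases eq_one_or_eq_s_sq_of_mem_zpowers (ker_toCoprod_le_zpowers (ker_toSL2Z_le_ker_toCoprod hg))
    with h | rfl
  · exact h
  · exact absurd hg (by rw [map_pow, toSL2Z_s]; decide)

end SL2ZPresentation

/-- The modular group `SL₂(ℤ)` is isomorphic to the group generated by `s, t` with relations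
`s⁴ = 1` and `(ts)³ = s²`, via `s ↦ [[0,-1],[1,0]]` and `t ↦ [[1,1],[0,1]]`. -/
theorem stmt1 :
    ∃ φ : PresentedGroup sl2Rels ≃* Matrix.SpecialLinearGroup (Fin 2) ℤ,
      φ (PresentedGroup.of true) = ModularGroup.S ∧
      φ (PresentedGroup.of false) = ModularGroup.T :=
  ⟨.ofBijective SL2ZPresentation.toSL2Z
      ⟨SL2ZPresentation.toSL2Z_injective, SL2ZPresentation.toSL2Z_surjective⟩,
    SL2ZPresentation.toSL2Z_s, SL2ZPresentation.toSL2Z_t⟩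
end

section
/- Let G be a locally compact abelian group with Pontryagin dual G*, and let σ be an automorphism of G × G* written in matrix form σ = [[α, β],[γ, δ]] with α: G → G, β: G → G*, γ: G* → G, δ: G* → G*. Then σ preserves the skew-symmetric bicharacter ⟨(x₁,x₁*),(x₂,x₂*)⟩ = (x₁,x₂*)(x₂,x₁*)⁻¹ if and only if αδ* − βγ* = 1_G, αβ* = βα*, and γδ* = δγ*. -/
/-- The Pontryagin dual of a topological abelian group `G` (written multiplicatively):
continuous homomorphisms into the circle group `𝕋`. -/
abbrev PDual (G : Type*) [Monoid G] [TopologicalSpace G] : Type _ :=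
  ContinuousMonoidHom G Circle

/-- The bicharacter `F((x₁,x₁*),(x₂,x₂*)) = (x₁, x₂*)` on `(G × G*) × (G × G*)`. -/
noncomputable def Fbic {G : Type*} [CommGroup G] [TopologicalSpace G]
    (w₁ w₂ : G × PDual G) : Circle :=
  w₂.2 w₁.1


/-!
Both `(w₁, w₂) ↦ ⟨σ w₁, σ w₂⟩` and `⟨·, ·⟩` are multiplicative in each variable, and every
`(x, χ)` is the product `(x, 1) * (1, χ)`, so the two forms agree as soon as they agree on pairs
of such generators. By skew-symmetry only three kinds of pairs remain, and on them the pulled-back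
form evaluates to the three matrix conditions.
-/

namespace PDual

variable {G : Type*} [CommGroup G] [TopologicalSpace G]

noncomputable def skewFbic (w₁ w₂ : G × PDual G) : Circle :=
  Fbic w₁ w₂ * (Fbic w₂ w₁)⁻¹

theorem skewFbic_apply (x y : G) (χ ψ : PDual G) :
    skewFbic (x, χ) (y, ψ) = ψ x * (χ y)⁻¹ :=
  rfl

theorem skewFbic_mul_left (w₁ w₂ w₃ : G × PDual G) :
    skewFbic (w₁ * w₂) w₃ = skewFbic w₁ w₃ * skewFbic w₂ w₃ := by
  simp only [skewFbic, Fbic, Prod.fst_mul, Prod.snd_mul, map_mul,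
    ContinuousMonoidHom.mul_apply, mul_inv]
  ac_rfl

theorem skewFbic_mul_right (w₁ w₂ w₃ : G × PDual G) :
    skewFbic w₁ (w₂ * w₃) = skewFbic w₁ w₂ * skewFbic w₁ w₃ := by
  simp only [skewFbic, Fbic, Prod.fst_mul, Prod.snd_mul, map_mul,
    ContinuousMonoidHom.mul_apply, mul_inv]
  ac_rfl

theorem skewFbic_swap (w₁ w₂ : G × PDual G) : skewFbic w₂ w₁ = (skewFbic w₁ w₂)⁻¹ := by
  simp only [skewFbic, mul_inv_rev, inv_inv]

theorem skewFbic_map_eq_iff (f : G × PDual G →* G × PDual G) :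
    (∀ w₁ w₂, skewFbic (f w₁) (f w₂) = skewFbic w₁ w₂) ↔
      ((∀ (x : G) (ψ : PDual G), skewFbic (f (x, 1)) (f (1, ψ)) = ψ x)
        ∧ (∀ x y : G, skewFbic (f (x, 1)) (f (y, 1)) = 1)
        ∧ (∀ χ ψ : PDual G, skewFbic (f (1, χ)) (f (1, ψ)) = 1)) := by
  constructor
  · intro h
    refine ⟨fun x ψ => ?_, fun x y => ?_, fun χ ψ => ?_⟩ <;> simp [h, skewFbic_apply]
  · rintro ⟨h_inl_inr, h_inl_inl, h_inr_inr⟩ ⟨x, χ⟩ ⟨y, ψ⟩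
    have mk_eq_mul : ∀ (z : G) (ξ : PDual G), ((z, ξ) : G × PDual G) = (z, 1) * (1, ξ) := by
      simp
    rw [mk_eq_mul x χ, mk_eq_mul y ψ, map_mul, map_mul]
    simp only [skewFbic_mul_left, skewFbic_mul_right]
    rw [skewFbic_swap (f (y, 1)) (f (1, χ))]
    simp [h_inl_inr, h_inl_inl, h_inr_inr, skewFbic_apply]

end PDual

open PDual

theorem stmt2_general (G : Type*) [CommGroup G] [TopologicalSpace G]
    (σ : (G × PDual G) ≃* (G × PDual G))
    (α : ContinuousMonoidHom G G) (β : ContinuousMonoidHom G (PDual G))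
    (γ : ContinuousMonoidHom (PDual G) G) (δ : ContinuousMonoidHom (PDual G) (PDual G))
    (hmat : ∀ (x : G) (χ : PDual G), σ (x, χ) = (α x * γ χ, β x * δ χ)) :
    (∀ w₁ w₂ : G × PDual G,
        Fbic (σ w₁) (σ w₂) * (Fbic (σ w₂) (σ w₁))⁻¹ = Fbic w₁ w₂ * (Fbic w₂ w₁)⁻¹)
      ↔ ((∀ (x : G) (χ : PDual G), δ χ (α x) * (β x (γ χ))⁻¹ = χ x)   -- αδ* − βγ* = 1_G
          ∧ (∀ x y : G, β y (α x) = β x (α y))                        -- αβ* = βα*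
          ∧ (∀ χ ψ : PDual G, δ χ (γ ψ) = δ ψ (γ χ))) := by           -- γδ* = δγ*
  have σ_inl : ∀ x, σ (x, 1) = (α x, β x) := by simp [hmat]
  have σ_inr : ∀ χ, σ (1, χ) = (γ χ, δ χ) := by simp [hmat]
  refine (skewFbic_map_eq_iff σ.toMonoidHom).trans ?_
  simp only [MulEquiv.coe_toMonoidHom, σ_inl, σ_inr, skewFbic_apply, mul_inv_eq_one]
  exact and_congr_right' (and_congr_right' (forall₂_congr fun _ _ => eq_comm))

/-- Let `G` be a locally compact abelian group with Pontryagin dual `G*`, and let `σ` be a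
(topological) automorphism of `G × G*` given in matrix form by `α : G → G`, `β : G → G*`,
`γ : G* → G`, `δ : G* → G*`, i.e. `(x, x*)σ = (xα · x*γ, xβ · x*δ)`.  Then `σ` preserves the
skew-symmetric bicharacter `⟨w₁, w₂⟩ = F(w₁,w₂) F(w₂,w₁)⁻¹` if and only if
`αδ* − βγ* = 1_G`, `αβ* = βα*` and `γδ* = δγ*` (the three conditions being written out
pointwise via the pairing). -/
theorem stmt2 (G : Type*) [CommGroup G] [TopologicalSpace G] [IsTopologicalGroup G]
    [LocallyCompactSpace G] [T2Space G]
    (σ : (G × PDual G) ≃* (G × PDual G)) (hσ : Continuous σ) (hσ' : Continuous σ.symm)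
    (α : ContinuousMonoidHom G G) (β : ContinuousMonoidHom G (PDual G))
    (γ : ContinuousMonoidHom (PDual G) G) (δ : ContinuousMonoidHom (PDual G) (PDual G))
    (hmat : ∀ (x : G) (χ : PDual G), σ (x, χ) = (α x * γ χ, β x * δ χ)) :
    (∀ w₁ w₂ : G × PDual G,
        Fbic (σ w₁) (σ w₂) * (Fbic (σ w₂) (σ w₁))⁻¹ = Fbic w₁ w₂ * (Fbic w₂ w₁)⁻¹)
      ↔ ((∀ (x : G) (χ : PDual G), δ χ (α x) * (β x (γ χ))⁻¹ = χ x)   -- αδ* − βγ* = 1_G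
          ∧ (∀ x y : G, β y (α x) = β x (α y))                        -- αβ* = βα*
          ∧ (∀ χ ψ : PDual G, δ χ (γ ψ) = δ ψ (γ χ))) :=
  stmt2_general G σ α β γ δ hmat
end

section
/- Let G be a locally compact abelian group in which x ↦ 2x is an automorphism. Then the map (w, t) ↦ (w, F(½w, w)⁻¹ t) is a group isomorphism from the Heisenberg group A(G) (with product (w₁,t₁)(w₂,t₂) = (w₁+w₂, F(w₁,w₂)t₁t₂)) onto the group (A(G), *) with product (w₁,t₁)*(w₂,t₂) = (w₁+w₂, F(½w₁,w₂)F(½w₂,w₁)⁻¹t₁t₂). -/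
/-- The underlying set of the Heisenberg group `A(G) = G × G* × 𝕋`. -/
abbrev Heis (G : Type*) [CommGroup G] [TopologicalSpace G] : Type _ :=
  (G × PDual G) × Circle

/-- The Heisenberg group law `(w₁,t₁)(w₂,t₂) = (w₁ + w₂, F(w₁,w₂) t₁ t₂)`. -/
noncomputable def heisMul {G : Type*} [CommGroup G] [TopologicalSpace G]
    (a b : Heis G) : Heis G :=
  (a.1 * b.1, Fbic a.1 b.1 * a.2 * b.2)

/-- The inverse for the Heisenberg group law. -/
noncomputable def heisInv {G : Type*} [CommGroup G] [TopologicalSpace G] (a : Heis G) : Heis G :=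
  (a.1⁻¹, Fbic a.1 a.1 * a.2⁻¹)

/-- The twisted Heisenberg group law
`(w₁,t₁) * (w₂,t₂) = (w₁ + w₂, F(½w₁, w₂) F(½w₂, w₁)⁻¹ t₁ t₂)`, where `e = ½` is the inverse
of the doubling automorphism of `G`. -/
noncomputable def heisStarMul {G : Type*} [CommGroup G] [TopologicalSpace G]
    (e : G ≃* G) (a b : Heis G) : Heis G :=
  (a.1 * b.1, Fbic (e a.1.1, a.1.2) b.1 * (Fbic (e b.1.1, b.1.2) a.1)⁻¹ * a.2 * b.2)

/-! The twisted cocycle `F(½w₁, w₂) F(½w₂, w₁)⁻¹` differs from the Heisenberg cocycle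
`F(w₁, w₂)` by the coboundary of `w ↦ F(½w, w)`. Indeed `F` is a bicharacter, so
`F(w₁, w₂) = F(½w₁, w₂)²`, while `F(½(w₁ + w₂), w₁ + w₂)` splits into the four terms
`F(½wᵢ, wⱼ)`. A shear by a coboundary is an isomorphism between the two group laws. -/

section Twist

variable {G : Type*} [CommGroup G] [TopologicalSpace G]

theorem Fbic_mul_left (w₁ w₂ w : G × PDual G) : Fbic (w₁ * w₂) w = Fbic w₁ w * Fbic w₂ w :=
  map_mul w.2 w₁.1 w₂.1

theorem Fbic_mul_right (w w₁ w₂ : G × PDual G) : Fbic w (w₁ * w₂) = Fbic w w₁ * Fbic w w₂ :=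
  rfl

theorem Fbic_half_sq (e : G ≃* G) (he : ∀ x : G, e (x * x) = x) (w₁ w₂ : G × PDual G) :
    Fbic (e w₁.1, w₁.2) w₂ ^ 2 = Fbic w₁ w₂ := by
  have he' : e w₁.1 * e w₁.1 = w₁.1 := e.injective (by rw [he])
  simp only [Fbic, sq, ← map_mul, he']

theorem pair_half_mul (e : G ≃* G) (w₁ w₂ : G × PDual G) :
    ((e (w₁ * w₂).1, (w₁ * w₂).2) : G × PDual G) = (e w₁.1, w₁.2) * (e w₂.1, w₂.2) := by
  simp only [Prod.fst_mul, Prod.snd_mul, map_mul, Prod.mk_mul_mk]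

noncomputable def heisTwist (e : G ≃* G) (z : Heis G) : Heis G :=
  (z.1, (Fbic (e z.1.1, z.1.2) z.1)⁻¹ * z.2)

theorem heisTwist_bijective (e : G ≃* G) : Function.Bijective (heisTwist e) :=
  (Equiv.prodShear (Equiv.refl (G × PDual G))
    fun w => Equiv.mulLeft ((Fbic (e w.1, w.2) w)⁻¹ : Circle) : Heis G ≃ Heis G).bijective

theorem heisTwist_heisMul (e : G ≃* G) (he : ∀ x : G, e (x * x) = x) (a b : Heis G) :
    heisTwist e (heisMul a b) = heisStarMul e (heisTwist e a) (heisTwist e b) := by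
  obtain ⟨w₁, t₁⟩ := a
  obtain ⟨w₂, t₂⟩ := b
  simp only [heisTwist, heisMul, heisStarMul, Prod.mk.injEq, true_and]
  rw [pair_half_mul, Fbic_mul_left, Fbic_mul_right, Fbic_mul_right, ← Fbic_half_sq e he w₁ w₂]
  apply Additive.ofMul.injective
  simp only [ofMul_mul, ofMul_inv, ofMul_pow]
  abel

end Twist

theorem stmt6_general (G : Type*) [CommGroup G] [TopologicalSpace G]
    (e : G ≃* G) (he : ∀ x : G, e (x * x) = x) :
    Function.Bijective
        (fun z : Heis G => ((z.1, (Fbic (e z.1.1, z.1.2) z.1)⁻¹ * z.2) : Heis G)) ∧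
      ∀ a b : Heis G,
        (fun z : Heis G => ((z.1, (Fbic (e z.1.1, z.1.2) z.1)⁻¹ * z.2) : Heis G)) (heisMul a b)
          = heisStarMul e
              ((fun z : Heis G => ((z.1, (Fbic (e z.1.1, z.1.2) z.1)⁻¹ * z.2) : Heis G)) a)
              ((fun z : Heis G => ((z.1, (Fbic (e z.1.1, z.1.2) z.1)⁻¹ * z.2) : Heis G)) b) :=
  ⟨heisTwist_bijective e, heisTwist_heisMul e he⟩

/-- Let `G` be a locally compact abelian group in which doubling `x ↦ 2x` is an automorphism,
with inverse `½ = e`.  Then `(w, t) ↦ (w, F(½w, w)⁻¹ t)` is a group isomorphism from the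
Heisenberg group `A(G)` onto `(A(G), *)` with the twisted product
`(w₁,t₁) * (w₂,t₂) = (w₁+w₂, F(½w₁,w₂) F(½w₂,w₁)⁻¹ t₁ t₂)`. -/
theorem stmt6 (G : Type*) [CommGroup G] [TopologicalSpace G] [IsTopologicalGroup G]
    [LocallyCompactSpace G] [T2Space G]
    (e : G ≃* G) (he : ∀ x : G, e (x * x) = x) :
    Function.Bijective
        (fun z : Heis G => ((z.1, (Fbic (e z.1.1, z.1.2) z.1)⁻¹ * z.2) : Heis G)) ∧
      ∀ a b : Heis G,
        (fun z : Heis G => ((z.1, (Fbic (e z.1.1, z.1.2) z.1)⁻¹ * z.2) : Heis G)) (heisMul a b)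
          = heisStarMul e
              ((fun z : Heis G => ((z.1, (Fbic (e z.1.1, z.1.2) z.1)⁻¹ * z.2) : Heis G)) a)
              ((fun z : Heis G => ((z.1, (Fbic (e z.1.1, z.1.2) z.1)⁻¹ * z.2) : Heis G)) b) :=
  stmt6_general G e he
end

section
/- Let G be an abelian topological group (in LCA), h: G → 𝕋 a quadratic character with h(x) = h(−x), and ρ: G → G* the homomorphism satisfying h(x+y)h(x)⁻¹h(y)⁻¹ = (x, yρ). Assume ρ is an isomorphism. Then in the group B₀(G) of automorphisms of the Heisenberg group A(G) fixing the center, the elements t₀(h) and d₀'(ρ⁻¹) satisfy d₀'(ρ⁻¹)⁴ = 1 and (t₀(h)·d₀'(ρ⁻¹))³ = d₀'(ρ⁻¹)², so there is a group homomorphism SL₂(ℤ) → B₀(G) sending [[1,1],[0,1]] ↦ t₀(h) and [[0,-1],[1,0]] ↦ d₀'(ρ⁻¹). -/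
section
variable {G : Type*} [CommGroup G] [TopologicalSpace G] [IsTopologicalGroup G]

/-- The element `t₀(h) = ([[1, ρ],[0, 1]], h(x))` of `B₀(G)`, acting on the Heisenberg group
`A(G)` (as a right action) by `((x, x*), t) ↦ ((x, xρ · x*), h(x) t)`. -/
noncomputable def t0 (h : G → Circle) (ρ : G ≃* PDual G) (z : Heis G) : Heis G :=
  ((z.1.1, ρ z.1.1 * z.1.2), h z.1.1 * z.2)

/-- The element `d₀'(ρ⁻¹) = ([[0, −ρ],[ρ⁻¹, 0]], (x, −x*))` of `B₀(G)`, acting on the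
Heisenberg group `A(G)` (as a right action) by
`((x, x*), t) ↦ ((x*ρ⁻¹, (xρ)⁻¹), (x, x*)⁻¹ t)`. -/
noncomputable def d0' (ρ : G ≃* PDual G) (z : Heis G) : Heis G :=
  ((ρ.symm z.1.2, (ρ z.1.1)⁻¹), (z.1.2 z.1.1)⁻¹ * z.2)

end

/-!
In the coordinates `(x, u) ↦ (x, uρ)` on `G × G*`, the bicharacter `F` becomes
`F((x, u), (x', u')) = β(u', x)`, where `β(y, x) = (x, yρ)` is the symmetric polar form of `h`;
evenness of `h` gives `β(x, x) = h(x)²`. A matrix `g = [[a, b], [c, d]]` acts on `G × G` by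
`σ_g : (x, u) ↦ (xᵃuᶜ, xᵇuᵈ)` and on the centre by multiplication with
`f_g(x, u) = h(x)^{ab} h(u)^{cd} β(u, x)^{bc}`. Expanding `h` and `β` on monomials `xᵐuⁿ` turns
both the `B₀` condition for `(σ_g, f_g)` and the multiplicativity of `g ↦ (σ_g, f_g)` into
polynomial identities in `a, b, c, d` that hold once `ad - bc = 1`. Since `T` and `S` act as
`t₀(h)` and `d₀'(ρ⁻¹)`, the relations `S⁴ = 1` and `(TS)³ = S²` of `SL₂(ℤ)` carry over.
-/

theorem MonoidHom.map_zpow_zpow₂ {G H M : Type*} [Group G] [Group H] [CommGroup M]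
    (f : G →* H →* M) (x : G) (y : H) (m n : ℤ) : f (x ^ m) (y ^ n) = f x y ^ (m * n) := by
  rw [map_zpow (f (x ^ m)), map_zpow f, MonoidHom.zpow_apply, ← zpow_mul]

section Quadratic

variable {G M : Type*} [CommGroup G] [CommGroup M]

def IsQuadraticWithPolar (h : G → M) (β : G →* G →* M) : Prop :=
  ∀ x y, h (x * y) * (h x)⁻¹ * (h y)⁻¹ = β y x

namespace IsQuadraticWithPolar

variable {h : G → M} {β : G →* G →* M} (hq : IsQuadraticWithPolar h β)
include hq

theorem map_mul (x y : G) : h (x * y) = h x * h y * β y x := by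
  rw [← hq x y, mul_assoc (h (x * y)), ← mul_inv, mul_inv_cancel_comm_assoc]

theorem map_one : h 1 = 1 := by
  simpa using hq 1 1

theorem polar_comm (x y : G) : β x y = β y x := by
  rw [← hq x y, ← hq y x, mul_comm x y, mul_right_comm]

variable (heven : ∀ x, h x⁻¹ = h x)
include heven

theorem polar_self (x : G) : β x x = h x ^ 2 := by
  have hinv : 1 = h x * h x * (β x x)⁻¹ := by
    simpa only [mul_inv_cancel, hq.map_one, heven, map_inv, MonoidHom.inv_apply]
      using hq.map_mul x x⁻¹
  rw [pow_two, ← eq_mul_inv_iff_mul_eq.mp hinv, one_mul]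

theorem map_pow (x : G) (n : ℕ) : h (x ^ n) = h x ^ (n * n) := by
  induction n with
  | zero => simp [hq.map_one]
  | succ n ih =>
    rw [pow_succ, hq.map_mul, ih, _root_.map_pow, hq.polar_self heven, ← pow_mul, ← pow_succ,
      ← pow_add]
    ring_nf

theorem map_zpow (x : G) (n : ℤ) : h (x ^ n) = h x ^ (n * n) := by
  obtain ⟨n, rfl | rfl⟩ := Int.eq_nat_or_neg n <;>
    simp only [zpow_neg, heven, zpow_natCast, hq.map_pow heven, neg_mul_neg, ← Nat.cast_mul]

theorem map_zpow_mul_zpow (x u : G) (m n : ℤ) :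
    h (x ^ m * u ^ n) = h x ^ (m * m) * h u ^ (n * n) * β u x ^ (n * m) := by
  rw [hq.map_mul, hq.map_zpow heven, hq.map_zpow heven, MonoidHom.map_zpow_zpow₂]

theorem polar_zpow_mul_zpow (x u : G) (a b c d : ℤ) :
    β (x ^ b * u ^ d) (x ^ a * u ^ c)
      = h x ^ (2 * a * b) * h u ^ (2 * c * d) * β u x ^ (a * d + b * c) := by
  simp only [_root_.map_mul, MonoidHom.mul_apply, MonoidHom.map_zpow_zpow₂, hq.polar_self heven,
    hq.polar_comm x u]
  apply Additive.ofMul.injective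
  simp only [ofMul_mul, ofMul_zpow, ofMul_pow]
  match_scalars <;> ring

end IsQuadraticWithPolar

end Quadratic

section Cocycle

variable {G M : Type*} [CommGroup G] [CommGroup M]

def vecMulZpow (g : Matrix (Fin 2) (Fin 2) ℤ) : G × G →* G × G :=
  ((zpowGroupHom (g 0 0)).coprod (zpowGroupHom (g 1 0))).prod
    ((zpowGroupHom (g 0 1)).coprod (zpowGroupHom (g 1 1)))

@[simp]
theorem vecMulZpow_apply (g : Matrix (Fin 2) (Fin 2) ℤ) (w : G × G) :
    vecMulZpow g w = (w.1 ^ g 0 0 * w.2 ^ g 1 0, w.1 ^ g 0 1 * w.2 ^ g 1 1) :=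
  rfl

theorem vecMulZpow_one (w : G × G) : vecMulZpow 1 w = w := by
  simp

theorem vecMulZpow_mul (g g' : Matrix (Fin 2) (Fin 2) ℤ) (w : G × G) :
    vecMulZpow (g * g') w = vecMulZpow g' (vecMulZpow g w) := by
  simp only [vecMulZpow_apply, Matrix.mul_apply, Fin.sum_univ_two]
  ext <;>
  · apply Additive.ofMul.injective
    simp only [ofMul_mul, ofMul_zpow]
    module

/-- For `det g = 1`, `f_g(x, u)² = β(xᵇuᵈ, xᵃuᶜ) β(u, x)⁻¹`, that is,
`f_g(w)² = F(wσ_g, wσ_g) F(w, w)⁻¹`. -/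
def sl2Cocycle (h : G → M) (β : G →* G →* M) (g : Matrix (Fin 2) (Fin 2) ℤ) (w : G × G) : M :=
  h w.1 ^ (g 0 0 * g 0 1) * h w.2 ^ (g 1 0 * g 1 1) * β w.2 w.1 ^ (g 0 1 * g 1 0)

variable {h : G → M} {β : G →* G →* M}

theorem sl2Cocycle_one (w : G × G) : sl2Cocycle h β 1 w = 1 := by
  simp [sl2Cocycle]

theorem sl2Cocycle_apply_one (hq : IsQuadraticWithPolar h β) (g : Matrix (Fin 2) (Fin 2) ℤ) :
    sl2Cocycle h β g 1 = 1 := by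
  simp [sl2Cocycle, hq.map_one]

theorem sl2Cocycle_mul (hq : IsQuadraticWithPolar h β) (heven : ∀ x, h x⁻¹ = h x)
    (g g' : Matrix (Fin 2) (Fin 2) ℤ) (hg' : g'.det = 1) (w : G × G) :
    sl2Cocycle h β (g * g') w = sl2Cocycle h β g w * sl2Cocycle h β g' (vecMulZpow g w) := by
  rw [Matrix.det_fin_two] at hg'
  simp only [sl2Cocycle, vecMulZpow_apply, Matrix.mul_apply, Fin.sum_univ_two,
    hq.map_zpow_mul_zpow heven, hq.polar_zpow_mul_zpow heven]
  apply Additive.ofMul.injective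
  simp only [ofMul_mul, ofMul_zpow]
  match_scalars
  · linear_combination (g 0 0 * g 0 1) * hg'
  · linear_combination (g 1 0 * g 1 1) * hg'
  · linear_combination (g 0 1 * g 1 0) * hg'

theorem sl2Cocycle_apply_mul (hq : IsQuadraticWithPolar h β) (g : Matrix (Fin 2) (Fin 2) ℤ)
    (hg : g.det = 1) (w w' : G × G) :
    sl2Cocycle h β g (w * w') * β w'.2 w.1
      = sl2Cocycle h β g w * sl2Cocycle h β g w' * β (vecMulZpow g w').2 (vecMulZpow g w).1 := by
  rw [Matrix.det_fin_two] at hg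
  simp only [sl2Cocycle, vecMulZpow_apply, Prod.fst_mul, Prod.snd_mul, hq.map_mul,
    _root_.map_mul, MonoidHom.mul_apply, MonoidHom.map_zpow_zpow₂, hq.polar_comm w'.1 w.2]
  apply Additive.ofMul.injective
  simp only [ofMul_mul, ofMul_zpow]
  match_scalars <;> linarith

end Cocycle

section Heisenberg

open scoped MatrixGroups

variable {G : Type*} [CommGroup G] [TopologicalSpace G]

noncomputable def dualPairing (ρ : G ≃* PDual G) : G →* G →* Circle where
  toFun y := (ρ y).toMonoidHom
  map_one' := by ext; simp
  map_mul' y y' := by ext; simp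

noncomputable def dualCoords (ρ : G ≃* PDual G) : G × G ≃* G × PDual G :=
  (MulEquiv.refl G).prodCongr ρ

noncomputable def sl2Act (h : G → Circle) (ρ : G ≃* PDual G) (g : SL(2, ℤ)) (z : Heis G) :
    Heis G :=
  (dualCoords ρ (vecMulZpow g ((dualCoords ρ).symm z.1)),
    sl2Cocycle h (dualPairing ρ) g ((dualCoords ρ).symm z.1) * z.2)

variable (h : G → Circle) (ρ : G ≃* PDual G)

theorem dualPairing_apply (x y : G) : dualPairing ρ y x = ρ y x :=
  rfl

theorem dualCoords_apply (w : G × G) : dualCoords ρ w = (w.1, ρ w.2) :=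
  rfl

theorem sl2Act_dualCoords (g : SL(2, ℤ)) (w : G × G) (t : Circle) :
    sl2Act h ρ g (dualCoords ρ w, t)
      = (dualCoords ρ (vecMulZpow g w), sl2Cocycle h (dualPairing ρ) g w * t) := by
  simp only [sl2Act, MulEquiv.symm_apply_apply]

theorem heisMul_dualCoords (w w' : G × G) (t t' : Circle) :
    heisMul (dualCoords ρ w, t) (dualCoords ρ w', t')
      = (dualCoords ρ (w * w'), dualPairing ρ w'.2 w.1 * t * t') := by
  rw [heisMul, map_mul]
  rfl

theorem sl2Act_one (z : Heis G) : sl2Act h ρ 1 z = z := by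
  obtain ⟨v, t⟩ := z
  obtain ⟨w, rfl⟩ := (dualCoords ρ).surjective v
  rw [sl2Act_dualCoords, Matrix.SpecialLinearGroup.coe_one, vecMulZpow_one, sl2Cocycle_one,
    one_mul]

theorem sl2Act_mul (hq : IsQuadraticWithPolar h (dualPairing ρ)) (heven : ∀ x, h x⁻¹ = h x)
    (g g' : SL(2, ℤ)) (z : Heis G) :
    sl2Act h ρ (g * g') z = sl2Act h ρ g' (sl2Act h ρ g z) := by
  obtain ⟨v, t⟩ := z
  obtain ⟨w, rfl⟩ := (dualCoords ρ).surjective v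
  simp only [sl2Act_dualCoords, Matrix.SpecialLinearGroup.coe_mul, vecMulZpow_mul,
    sl2Cocycle_mul hq heven _ _ g'.2, mul_assoc, mul_left_comm]

theorem sl2Act_bijective (hq : IsQuadraticWithPolar h (dualPairing ρ))
    (heven : ∀ x, h x⁻¹ = h x) (g : SL(2, ℤ)) : Function.Bijective (sl2Act h ρ g) := by
  refine Function.bijective_iff_has_inverse.mpr ⟨sl2Act h ρ g⁻¹, fun z => ?_, fun z => ?_⟩
  · rw [← sl2Act_mul h ρ hq heven, mul_inv_cancel, sl2Act_one h ρ]
  · rw [← sl2Act_mul h ρ hq heven, inv_mul_cancel, sl2Act_one h ρ]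

theorem sl2Act_heisMul (hq : IsQuadraticWithPolar h (dualPairing ρ)) (g : SL(2, ℤ))
    (z z' : Heis G) :
    sl2Act h ρ g (heisMul z z') = heisMul (sl2Act h ρ g z) (sl2Act h ρ g z') := by
  obtain ⟨v, t⟩ := z
  obtain ⟨w, rfl⟩ := (dualCoords ρ).surjective v
  obtain ⟨v', t'⟩ := z'
  obtain ⟨w', rfl⟩ := (dualCoords ρ).surjective v'
  rw [heisMul_dualCoords, sl2Act_dualCoords, sl2Act_dualCoords, sl2Act_dualCoords,
    heisMul_dualCoords, map_mul]
  congr 1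
  rw [← mul_assoc, ← mul_assoc, sl2Cocycle_apply_mul hq _ g.2]
  ac_rfl

theorem sl2Act_center (hq : IsQuadraticWithPolar h (dualPairing ρ)) (g : SL(2, ℤ)) (t : Circle) :
    sl2Act h ρ g ((1, t) : Heis G) = (1, t) := by
  simpa only [map_one, sl2Cocycle_apply_one hq, one_mul] using sl2Act_dualCoords h ρ g 1 t

theorem sl2Act_T [IsTopologicalGroup G] : sl2Act h ρ ModularGroup.T = t0 h ρ := by
  funext z
  obtain ⟨v, t⟩ := z
  obtain ⟨w, rfl⟩ := (dualCoords ρ).surjective v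
  rw [sl2Act_dualCoords]
  simp [t0, sl2Cocycle, ModularGroup.coe_T, dualCoords_apply]

theorem sl2Act_S [IsTopologicalGroup G] : sl2Act h ρ ModularGroup.S = d0' ρ := by
  funext z
  obtain ⟨v, t⟩ := z
  obtain ⟨w, rfl⟩ := (dualCoords ρ).surjective v
  rw [sl2Act_dualCoords]
  simp [d0', sl2Cocycle, ModularGroup.coe_S, dualCoords_apply, dualPairing_apply]

end Heisenberg

theorem stmt7_general (G : Type*) [CommGroup G] [TopologicalSpace G] [IsTopologicalGroup G]
    (h : G → Circle) (heven : ∀ x : G, h x⁻¹ = h x)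
    (ρ : G ≃* PDual G)
    (hq : ∀ x y : G, h (x * y) * (h x)⁻¹ * (h y)⁻¹ = ρ y x) :
    (∀ z : Heis G, d0' ρ (d0' ρ (d0' ρ (d0' ρ z))) = z) ∧
    (∀ z : Heis G,
        d0' ρ (t0 h ρ (d0' ρ (t0 h ρ (d0' ρ (t0 h ρ z))))) = d0' ρ (d0' ρ z)) ∧
    ∃ φ : Matrix.SpecialLinearGroup (Fin 2) ℤ → Heis G → Heis G,
      (∀ g₁ g₂ : Matrix.SpecialLinearGroup (Fin 2) ℤ, ∀ z : Heis G,
          φ (g₁ * g₂) z = φ g₂ (φ g₁ z)) ∧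
      φ ModularGroup.T = t0 h ρ ∧ φ ModularGroup.S = d0' ρ ∧
      ∀ g : Matrix.SpecialLinearGroup (Fin 2) ℤ,
        Function.Bijective (φ g) ∧
        (∀ a b : Heis G, φ g (heisMul a b) = heisMul (φ g a) (φ g b)) ∧
        (∀ t : Circle, φ g ((1, t) : Heis G) = ((1, t) : Heis G)) := by
  have hS4 : ModularGroup.S * ModularGroup.S * ModularGroup.S * ModularGroup.S = 1 := by
    ext i j; fin_cases i <;> fin_cases j <;> rfl
  have hTS3 : ModularGroup.T * ModularGroup.S * ModularGroup.T * ModularGroup.S * ModularGroup.T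
      * ModularGroup.S = ModularGroup.S * ModularGroup.S := by
    ext i j; fin_cases i <;> fin_cases j <;> rfl
  have hquad : IsQuadraticWithPolar h (dualPairing ρ) := hq
  have hmul := sl2Act_mul h ρ hquad heven
  refine ⟨fun z => ?_, fun z => ?_, sl2Act h ρ, hmul, sl2Act_T h ρ, sl2Act_S h ρ, fun g =>
    ⟨sl2Act_bijective h ρ hquad heven g, sl2Act_heisMul h ρ hquad g, sl2Act_center h ρ hquad g⟩⟩
  · rw [← sl2Act_S h ρ]
    simp only [← hmul, hS4, sl2Act_one]
  · rw [← sl2Act_S h ρ, ← sl2Act_T h ρ]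
    simp only [← hmul, hTS3]

/-- Let `h` be a non-degenerate quadratic character of a locally compact abelian group `G`
satisfying `h(x) = h(−x)`, with associated isomorphism `ρ : G ≅ G*`, so that
`h(x+y) h(x)⁻¹ h(y)⁻¹ = (x, yρ)`.  Then in `B₀(G)` one has `d₀'(ρ⁻¹)⁴ = 1` and
`(t₀(h) d₀'(ρ⁻¹))³ = d₀'(ρ⁻¹)²`, and there is a group homomorphism `SL₂(ℤ) → B₀(G)`
(a homomorphism for the right-action convention) sending `[[1,1],[0,1]] ↦ t₀(h)` and
`[[0,−1],[1,0]] ↦ d₀'(ρ⁻¹)`, landing in the automorphisms of `A(G)` fixing the center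
pointwise. -/
theorem stmt7 (G : Type*) [CommGroup G] [TopologicalSpace G] [IsTopologicalGroup G]
    [LocallyCompactSpace G] [T2Space G]
    (h : G → Circle) (hcont : Continuous h) (heven : ∀ x : G, h x⁻¹ = h x)
    (ρ : G ≃* PDual G) (hρ : Continuous ρ) (hρ' : Continuous ρ.symm)
    (hq : ∀ x y : G, h (x * y) * (h x)⁻¹ * (h y)⁻¹ = ρ y x) :
    (∀ z : Heis G, d0' ρ (d0' ρ (d0' ρ (d0' ρ z))) = z) ∧
    (∀ z : Heis G,
        d0' ρ (t0 h ρ (d0' ρ (t0 h ρ (d0' ρ (t0 h ρ z))))) = d0' ρ (d0' ρ z)) ∧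
    ∃ φ : Matrix.SpecialLinearGroup (Fin 2) ℤ → Heis G → Heis G,
      (∀ g₁ g₂ : Matrix.SpecialLinearGroup (Fin 2) ℤ, ∀ z : Heis G,
          φ (g₁ * g₂) z = φ g₂ (φ g₁ z)) ∧
      φ ModularGroup.T = t0 h ρ ∧ φ ModularGroup.S = d0' ρ ∧
      ∀ g : Matrix.SpecialLinearGroup (Fin 2) ℤ,
        Function.Bijective (φ g) ∧
        (∀ a b : Heis G, φ g (heisMul a b) = heisMul (φ g a) (φ g b)) ∧
        (∀ t : Circle, φ g ((1, t) : Heis G) = ((1, t) : Heis G)) :=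
  stmt7_general G h heven ρ hq
end

section
/- Let G₁ → G₂ → G₃ be a short exact sequence in the category LCA of locally compact Hausdorff abelian groups (i.e., G₁ → G₂ is a closed embedding and G₂ → G₃ induces a topological isomorphism G₂/G₁ ≅ G₃). Then for any continuous homomorphism f: B → G₃ from an LCA group B, the pullback G₂' = {(a,b) ∈ G₂ × B : g(a) = f(b)} (with the subspace topology) exists in LCA, the projection G₂' → B is an open surjection with kernel topologically isomorphic to G₁, and G₁ → G₂' → B is again a short exact sequence in LCA. -/
open Topology

/-- The pullback `G₂' = {(a, b) ∈ G₂ × B : g(a) = f(b)}`, as a subgroup of `G₂ × B`. -/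
def pullbackSubgroup {G₂ G₃ B : Type*} [CommGroup G₂] [CommGroup G₃] [CommGroup B]
    (g : G₂ →* G₃) (f : B →* G₃) : Subgroup (G₂ × B) where
  carrier := {p | g p.1 = f p.2}
  one_mem' := by simp
  mul_mem' := by
    intro a b ha hb
    simp only [Set.mem_setOf_eq, Prod.fst_mul, Prod.snd_mul, map_mul] at *
    rw [ha, hb]
  inv_mem' := by
    intro a ha
    simp only [Set.mem_setOf_eq, Prod.fst_inv, Prod.snd_inv, map_inv] at *
    rw [ha]

/-!
The pullback is the equalizer of `g ∘ fst` and `f ∘ snd`, hence closed in the locally compact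
Hausdorff group `G₂ × B`. The projection to `B` is the base change of the open map `g` along the
continuous `f`, and base change preserves openness: a basic neighbourhood `V ×ˢ W` of `(a, b)` in
`G₂ × B` meets the pullback in a set whose projection contains `f ⁻¹' (g '' V) ∩ W`. The kernel
of the projection is `{(a, 1) | g a = 1} = i(G₁) × {1}`, a closed copy of `G₁` because `i` is a
closed embedding.
-/

theorem isClosedEmbedding_prodMk_right {X Y : Type*} [TopologicalSpace X] [TopologicalSpace Y]
    [T1Space Y] (y : Y) : IsClosedEmbedding (fun x : X ↦ (x, y)) :=
  .of_continuous_injective_isClosedMap (.prodMk_left y) (fun _ _ h ↦ congrArg Prod.fst h)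
    (isClosedMap_prodMk_right y)

namespace Function.Pullback

variable {X Y Z : Type*} {g : X → Z} {f : Y → Z}

theorem surjective_snd (hg : Surjective g) : Surjective (snd : g.Pullback f → Y) := fun y ↦
  let ⟨x, hx⟩ := hg (f y)
  ⟨⟨(x, y), hx⟩, rfl⟩

variable [TopologicalSpace X] [TopologicalSpace Y] [TopologicalSpace Z]

theorem isOpenMap_snd (hg : IsOpenMap g) (hf : Continuous f) :
    IsOpenMap (snd : g.Pullback f → Y) := by
  intro U hU
  obtain ⟨O, hO, rfl⟩ := isOpen_induced_iff.mp hU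
  rw [isOpen_iff_mem_nhds]
  rintro _ ⟨⟨⟨x, y⟩, hxy⟩, hO_xy, rfl⟩
  obtain ⟨V, hV, W, hW, hVW⟩ := mem_nhds_prod_iff.mp (hO.mem_nhds hO_xy)
  have hfV : f ⁻¹' (g '' V) ∈ 𝓝 y :=
    hf.continuousAt.preimage_mem_nhds (hxy ▸ hg.image_mem_nhds hV)
  filter_upwards [hfV, hW] with y' ⟨x', hx'V, hx'⟩ hy'W
  exact ⟨⟨(x', y'), hx'⟩, hVW ⟨hx'V, hy'W⟩, rfl⟩

end Function.Pullback

namespace pullbackSubgroup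

variable {G₁ G₂ G₃ B : Type*} [CommGroup G₁] [CommGroup G₂] [CommGroup G₃] [CommGroup B]
  {i : G₁ →* G₂} {g : G₂ →* G₃} (f : B →* G₃)

theorem isClosed [TopologicalSpace G₂] [TopologicalSpace G₃] [TopologicalSpace B] [T2Space G₃]
    (hg : Continuous g) (hf : Continuous f) : IsClosed (pullbackSubgroup g f : Set (G₂ × B)) :=
  isClosed_eq (hg.comp continuous_fst) (hf.comp continuous_snd)

def inl (hgi : ∀ x, g (i x) = 1) : G₁ →* pullbackSubgroup g f :=
  ((MonoidHom.inl G₂ B).comp i).codRestrict _ fun x ↦ show g (i x) = f 1 by rw [hgi, map_one]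

variable {f}

theorem coe_inl (hgi : ∀ x, g (i x) = 1) (x : G₁) : (inl f hgi x : G₂ × B) = (i x, 1) := rfl

theorem isClosedEmbedding_inl [TopologicalSpace G₁] [TopologicalSpace G₂] [TopologicalSpace B]
    [T1Space B] (hgi : ∀ x, g (i x) = 1) (hi : IsClosedEmbedding i)
    (hclosed : IsClosed (pullbackSubgroup g f : Set (G₂ × B))) :
    IsClosedEmbedding (inl f hgi) :=
  hclosed.isClosedEmbedding_subtypeVal.of_comp_iff.mp
    ((isClosedEmbedding_prodMk_right 1).comp hi)

theorem snd_eq_one_iff_mem_range_inl {hgi : ∀ x, g (i x) = 1}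
    (hexact : ∀ x, g x = 1 ↔ x ∈ Set.range i) (p : pullbackSubgroup g f) :
    (p : G₂ × B).2 = 1 ↔ p ∈ Set.range (inl f hgi) := by
  obtain ⟨⟨a, b⟩, hab : g a = f b⟩ := p
  constructor
  · rintro rfl
    obtain ⟨x, rfl⟩ := (hexact a).1 (hab.trans (map_one f))
    exact ⟨x, rfl⟩
  · rintro ⟨x, hx⟩
    exact congrArg (fun p : pullbackSubgroup g f ↦ (p : G₂ × B).2) hx.symm

end pullbackSubgroup

theorem stmt15_general (G₁ G₂ G₃ B : Type*)
    [CommGroup G₁] [TopologicalSpace G₁]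
    [CommGroup G₂] [TopologicalSpace G₂] [LocallyCompactSpace G₂] [T2Space G₂]
    [CommGroup G₃] [TopologicalSpace G₃] [T2Space G₃]
    [CommGroup B] [TopologicalSpace B] [LocallyCompactSpace B] [T2Space B]
    (i : G₁ →* G₂) (g : G₂ →* G₃)
    (hi : IsClosedEmbedding ⇑i)
    (hg : Continuous g) (hgs : Function.Surjective g) (hgo : IsOpenMap g)
    (hexact : ∀ x : G₂, g x = 1 ↔ x ∈ Set.range i)
    (f : B →* G₃) (hf : Continuous f) :
    -- the pullback exists in LCA:
    IsClosed ((pullbackSubgroup g f : Subgroup (G₂ × B)) : Set (G₂ × B)) ∧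
    LocallyCompactSpace (pullbackSubgroup g f) ∧
    T2Space (pullbackSubgroup g f) ∧
    -- the projection `G₂' → B` is a continuous open surjection:
    Continuous (fun p : pullbackSubgroup g f => (p : G₂ × B).2) ∧
    Function.Surjective (fun p : pullbackSubgroup g f => (p : G₂ × B).2) ∧
    IsOpenMap (fun p : pullbackSubgroup g f => (p : G₂ × B).2) ∧
    -- `i' : G₁ → G₂'`, `x ↦ (i x, 1)`, is a closed embedding whose image is the kernel of
    -- the projection, so that `G₁ → G₂' → B` is again a short exact sequence in LCA:
    ∃ i' : G₁ →* pullbackSubgroup g f,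
      (∀ x : G₁, ((i' x : G₂ × B)) = (i x, 1)) ∧
      IsClosedEmbedding ⇑i' ∧
      (∀ p : pullbackSubgroup g f, (p : G₂ × B).2 = 1 ↔ p ∈ Set.range i') := by
  have hclosed := pullbackSubgroup.isClosed f hg hf
  have hgi : ∀ x, g (i x) = 1 := fun x ↦ (hexact (i x)).2 ⟨x, rfl⟩
  exact ⟨hclosed, hclosed.locallyCompactSpace, inferInstance,
    continuous_snd.comp continuous_subtype_val,
    Function.Pullback.surjective_snd hgs, Function.Pullback.isOpenMap_snd hgo hf,
    pullbackSubgroup.inl f hgi, pullbackSubgroup.coe_inl hgi,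
    pullbackSubgroup.isClosedEmbedding_inl hgi hi hclosed,
    pullbackSubgroup.snd_eq_one_iff_mem_range_inl hexact⟩

/-- Let `G₁ → G₂ → G₃` be a short exact sequence in the category LCA of locally compact
Hausdorff abelian groups (`i` a closed embedding, `g` a continuous open surjection with
kernel the image of `i`).  Then for any continuous homomorphism `f : B → G₃` from an LCA
group `B`, the pullback `G₂' = {(a, b) ∈ G₂ × B : g(a) = f(b)}` (with the subspace topology)
exists in LCA (it is a closed, locally compact subgroup), the projection `G₂' → B` is a
continuous open surjection, its kernel is the image of a closed embedding of `G₁`, and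
`G₁ → G₂' → B` is again a short exact sequence in LCA. -/
theorem stmt15 (G₁ G₂ G₃ B : Type*)
    [CommGroup G₁] [TopologicalSpace G₁] [IsTopologicalGroup G₁]
    [LocallyCompactSpace G₁] [T2Space G₁]
    [CommGroup G₂] [TopologicalSpace G₂] [IsTopologicalGroup G₂]
    [LocallyCompactSpace G₂] [T2Space G₂]
    [CommGroup G₃] [TopologicalSpace G₃] [IsTopologicalGroup G₃]
    [LocallyCompactSpace G₃] [T2Space G₃]
    [CommGroup B] [TopologicalSpace B] [IsTopologicalGroup B]
    [LocallyCompactSpace B] [T2Space B]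
    (i : G₁ →* G₂) (g : G₂ →* G₃)
    (hi : IsClosedEmbedding ⇑i)
    (hg : Continuous g) (hgs : Function.Surjective g) (hgo : IsOpenMap g)
    (hexact : ∀ x : G₂, g x = 1 ↔ x ∈ Set.range i)
    (f : B →* G₃) (hf : Continuous f) :
    -- the pullback exists in LCA:
    IsClosed ((pullbackSubgroup g f : Subgroup (G₂ × B)) : Set (G₂ × B)) ∧
    LocallyCompactSpace (pullbackSubgroup g f) ∧
    T2Space (pullbackSubgroup g f) ∧
    -- the projection `G₂' → B` is a continuous open surjection:
    Continuous (fun p : pullbackSubgroup g f => (p : G₂ × B).2) ∧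
    Function.Surjective (fun p : pullbackSubgroup g f => (p : G₂ × B).2) ∧
    IsOpenMap (fun p : pullbackSubgroup g f => (p : G₂ × B).2) ∧
    -- `i' : G₁ → G₂'`, `x ↦ (i x, 1)`, is a closed embedding whose image is the kernel of
    -- the projection, so that `G₁ → G₂' → B` is again a short exact sequence in LCA:
    ∃ i' : G₁ →* pullbackSubgroup g f,
      (∀ x : G₁, ((i' x : G₂ × B)) = (i x, 1)) ∧
      IsClosedEmbedding ⇑i' ∧
      (∀ p : pullbackSubgroup g f, (p : G₂ × B).2 = 1 ↔ p ∈ Set.range i') :=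
  stmt15_general G₁ G₂ G₃ B i g hi hg hgs hgo hexact f hf
end

section
/- Let k be a field of characteristic ≠ 2, and consider the formal residue Res: k((t))dt → k sending Σ cᵢtⁱdt ↦ c₋₁. Let ω = Σ_{i≥0} c_i t^{ordω + i} dt be a nonzero element of k((t))dt with c₀ ≠ 0. If ord ω = 2d is even, then the k-bilinear pairing (f,g) ↦ Res(fgω) on k((t)) restricts so that the annihilator of t^{−d}k[[t]] with respect to this pairing is exactly t^{−d}k[[t]] itself. -/
open scoped Classical

/-- The formal residue `Res : k((t))dt → k`, sending `Σ cᵢ tⁱ dt ↦ c₋₁`.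
Here a differential `f dt` is identified with the Laurent series `f`. -/
noncomputable def formalRes {k : Type*} [Field k] (f : LaurentSeries k) : k :=
  f.coeff (-1)

/-- The subspace `t^(-d) k[[t]]` of `k((t))`. -/
def tPowInt {k : Type*} [Field k] (d : ℤ) : Set (LaurentSeries k) :=
  {f | ∀ n : ℤ, n < -d → f.coeff n = 0}

/-!
The pairing adds orders: `ord (f g ω) = ord f + ord g + 2d`. If `f, g ∈ t^(-d) k[[t]]` this is
at least `0`, so the residue vanishes. Conversely, if `ord f < -d`, pairing `f` with the monomial
`t^(-1 - ord f - 2d) ∈ t^(-d) k[[t]]` produces the residue `lc f · lc ω ≠ 0`.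
-/

open HahnSeries

section
variable {k : Type*} [Field k]

theorem mem_tPowInt_iff_le_orderTop {d : ℤ} {f : LaurentSeries k} :
    f ∈ tPowInt d ↔ ((-d : ℤ) : WithTop ℤ) ≤ f.orderTop := by
  simp only [le_orderTop_iff_forall, WithTop.coe_lt_coe]
  rfl

theorem formalRes_mul_mul_eq_zero_of_mem_tPowInt {d : ℤ} {f g ω : LaurentSeries k}
    (hf : f ∈ tPowInt d) (hg : g ∈ tPowInt d) (hord : ω.order = 2 * d) :
    formalRes (f * g * ω) = 0 := by
  have hω : ((2 * d : ℤ) : WithTop ℤ) ≤ ω.orderTop :=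
    le_orderTop_iff_forall.2 fun j hj ↦
      coeff_eq_zero_of_lt_order (hord ▸ WithTop.coe_lt_coe.1 hj)
  refine coeff_eq_zero_of_lt_orderTop ?_
  calc ((-1 : ℤ) : WithTop ℤ) < ((-d + -d + 2 * d : ℤ) : WithTop ℤ) := by
        exact_mod_cast (by omega : (-1 : ℤ) < -d + -d + 2 * d)
    _ = (-d : ℤ) + (-d : ℤ) + ((2 * d : ℤ) : WithTop ℤ) := by push_cast; rfl
    _ ≤ f.orderTop + g.orderTop + ω.orderTop :=
        add_le_add (add_le_add (mem_tPowInt_iff_le_orderTop.1 hf)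
          (mem_tPowInt_iff_le_orderTop.1 hg)) hω
    _ = (f * g * ω).orderTop := by rw [orderTop_mul, orderTop_mul]

theorem formalRes_mul_single_mul (f ω : LaurentSeries k) :
    formalRes (f * single (-1 - f.order - ω.order) 1 * ω) = f.leadingCoeff * ω.leadingCoeff := by
  rw [formalRes, mul_right_comm]
  convert coeff_mul_single_add (x := f * ω) (a := f.order + ω.order) (r := (1 : k)) using 1
  · congr 1; ring
  · rw [mul_one, coeff_mul_order_add_order]

end

theorem stmt17_general {k : Type*} [Field k]
    (ω : LaurentSeries k) (hω : ω ≠ 0) (d : ℤ) (hord : ω.order = 2 * d) :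
    {f : LaurentSeries k | ∀ g ∈ tPowInt (k := k) d, formalRes (f * g * ω) = 0}
      = tPowInt (k := k) d := by
  ext f
  refine ⟨fun hf ↦ ?_, fun hf g hg ↦ formalRes_mul_mul_eq_zero_of_mem_tPowInt hf hg hord⟩
  by_contra hfd
  have hf0 : f ≠ 0 := by
    rintro rfl
    exact hfd fun n _ ↦ coeff_zero
  have hford : f.order < -d := by
    rw [mem_tPowInt_iff_le_orderTop, not_le, ← order_eq_orderTop_of_ne_zero hf0] at hfd
    exact_mod_cast hfd
  have hmonomial_mem : single (-1 - f.order - ω.order) (1 : k) ∈ tPowInt d := by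
    rw [mem_tPowInt_iff_le_orderTop, orderTop_single one_ne_zero, hord]
    exact_mod_cast (by omega : -d ≤ -1 - f.order - 2 * d)
  have hres := hf _ hmonomial_mem
  rw [formalRes_mul_single_mul] at hres
  exact mul_ne_zero (leadingCoeff_ne_zero.2 hf0) (leadingCoeff_ne_zero.2 hω) hres

/-- Let `k` be a field of characteristic ≠ 2 and `ω = Σ_{i ≥ 0} c_i t^(ord ω + i) dt` a nonzero
element of `k((t))dt`.  If `ord ω = 2d` is even, then the annihilator of `t^(-d) k[[t]]` with
respect to the pairing `(f, g) ↦ Res (f g ω)` is exactly `t^(-d) k[[t]]`. -/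
theorem stmt17 {k : Type*} [Field k] (h2 : (2 : k) ≠ 0)
    (ω : LaurentSeries k) (hω : ω ≠ 0) (d : ℤ) (hord : ω.order = 2 * d) :
    {f : LaurentSeries k | ∀ g ∈ tPowInt (k := k) d, formalRes (f * g * ω) = 0}
      = tPowInt (k := k) d :=
  stmt17_general ω hω d hord
end
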